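/- arXiv:1610.03346 — 7 statements merged into one kernel-verified Lean document; each statement's English description precedes it below -/
import Mathlib

section
/- Fixed Point Lemma: if f : X → X is a weakly constant endofunction, then the type of fixed points of f, defined as Σ (x : X), x = f x, is a proposition: any two of its elements are equal. -/
theorem stmt4 {X : Type*} (f : X → X) (c : ∀ x y : X, f x = f y) :
    ∀ a b : (Σ' x : X, x = f x), a = b := by
  rintro ⟨x, p⟩ ⟨y, q⟩
  have h : x = y := p.trans ((c x y).trans q.symm)
  subst h
  rfl
end

section
/- A type X admits a weakly constant endofunction if and only if it has split support, i.e., there is a function from the propositional truncation of X to X. -/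
theorem stmt6 {X : Type*} :
    (∃ f : X → X, ∀ x y : X, f x = f y) ↔ Nonempty (Trunc X → X) := by
  constructor
  · rintro ⟨f, hf⟩
    exact ⟨fun t => t.lift f hf⟩
  · rintro ⟨g⟩
    exact ⟨fun x => g (Trunc.mk x), fun x y =>
      congrArg g (Trunc.eq _ _)⟩
end

section
/- Define X to be populated if every weakly constant endofunction on X has a fixed point: Populated X := ∀ f : X → X, (∀ x y, f x = f y) → Σ (x : X), x = f x. Then every merely inhabited type is populated: Trunc X → Populated X. -/
def Populated (X : Sort u) : Prop :=
  ∀ f : X → X, (∀ x y : X, f x = f y) → ∃ x : X, x = f x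

theorem stmt10 {X : Type u} : Trunc X → Populated X := by
  intro t f h
  obtain ⟨x⟩ := t.nonempty
  exact ⟨f x, h x (f x)⟩
end

section
/- The following are logically equivalent for a type X: (1) Populated X; (2) Trunc (Trunc X → X) → Trunc X; (3) (Trunc X → X) → X. -/
theorem stmt14 {X : Type u} :
    Nonempty (PProd
      (Populated X → (Trunc (Trunc X → X) → Trunc X))
      (PProd
        ((Trunc (Trunc X → X) → Trunc X) → ((Trunc X → X) → X))
        (((Trunc X → X) → X) → Populated X))) := by
  constructor
  refine ⟨?_, ?_, ?_⟩
  · intro hp t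
    refine t.lift (fun g => ?_) (fun a b => Subsingleton.elim _ _)
    have hx : Nonempty X := by
      obtain ⟨x, -⟩ := hp (fun x => g (Trunc.mk x))
        (fun x y => by show g (Trunc.mk x) = g (Trunc.mk y); rw [Subsingleton.elim (Trunc.mk x) (Trunc.mk y)])
      exact ⟨x⟩
    exact Trunc.mk (Classical.choice hx)
  · intro h g
    exact g (h (Trunc.mk g))
  · intro h f hf
    exact ⟨f (h (Trunc.lift f hf)), hf _ _⟩
end

section
/- Populatedness is idempotent: for any type X, Populated (Populated X) is logically equivalent to Populated X (and, assuming function extensionality, the two are equivalent types since both are subsingletons). -/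
theorem stmt15 {X : Type u} :
    Populated (Populated X) ↔ Populated X := by
  constructor
  · intro h
    obtain ⟨p, -⟩ := h id (fun _ _ => rfl)
    exact p
  · intro p f _
    exact ⟨p, proof_irrel _ _⟩
end

section
/- For any type X, Populated X implies ¬¬X; this does not require function extensionality. -/
theorem stmt16 {X : Type u} : Populated X → (X → False) → False := by
  intro hp hn
  obtain ⟨x, _⟩ := hp id (fun x y => (hn x).elim)
  exact hn x
end

section
/- For every type X, the type of split-support functions is populated: Populated (Trunc X → X) holds, i.e., every weakly constant endofunction on (Trunc X → X) has a fixed point. -/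
theorem stmt17 {X : Type u} : Populated (Trunc X → X) := by
  intro f hf
  refine ⟨fun t => Trunc.lift (fun x => f (fun _ => x)) (fun a b => hf _ _) t t, ?_⟩
  funext t
  induction t using Trunc.ind with
  | _ a => exact congrFun (hf _ _) _
end
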